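/- If S is an invertible square matrix over a field indexed by α ⊕ β, its inverse is T, and for every matrix M that is zero outside the α×α block, the conjugate S·M·T is also zero outside the α×α block (and similarly every matrix zero outside the β×β block conjugates to a matrix zero outside the β×β block), then the α×α block S₁₁ of S is invertible with inverse the α×α block T₁₁ of T. -/

import Mathlib

/-! Conjugating the projection `fromBlocks 0 0 0 1` onto the β-coordinates gives a matrix whose
α×α block is `S₁₂ * T₂₁`, so the hypothesis on β-block matrices forces `S₁₂ * T₂₁ = 0`. Then the
α×α block of `S * T = 1`, namely `S₁₁ * T₁₁ + S₁₂ * T₂₁ = 1`, says `S₁₁ * T₁₁ = 1`, and a one-sided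
inverse of a square matrix over a field is two-sided. -/

open Matrix

namespace Matrix

variable {R : Type*} {l m n o p q : Type*}

theorem toBlocks₁₁_mul [Fintype n] [Fintype o] [NonUnitalNonAssocSemiring R]
    (S : Matrix (l ⊕ m) (n ⊕ o) R) (T : Matrix (n ⊕ o) (p ⊕ q) R) :
    (S * T).toBlocks₁₁ =
      S.toBlocks₁₁ * T.toBlocks₁₁ + S.toBlocks₁₂ * T.toBlocks₂₁ := by
  rw [← fromBlocks_toBlocks S, ← fromBlocks_toBlocks T, fromBlocks_multiply,
    toBlocks_fromBlocks₁₁]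
  simp only [toBlocks_fromBlocks₁₁, toBlocks_fromBlocks₁₂, toBlocks_fromBlocks₂₁]

theorem toBlocks₁₁_mul_fromBlocks_zero_one_mul [Fintype n] [Fintype o] [DecidableEq o]
    [NonAssocSemiring R] (S : Matrix (l ⊕ m) (n ⊕ o) R) (T : Matrix (n ⊕ o) (p ⊕ q) R) :
    (S * (fromBlocks 0 0 0 1 : Matrix (n ⊕ o) (n ⊕ o) R) * T).toBlocks₁₁ =
      S.toBlocks₁₂ * T.toBlocks₂₁ := by
  rw [← fromBlocks_toBlocks S, ← fromBlocks_toBlocks T]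
  simp only [fromBlocks_multiply, toBlocks_fromBlocks₁₁, toBlocks_fromBlocks₁₂,
    toBlocks_fromBlocks₂₁, Matrix.mul_zero, Matrix.zero_mul, Matrix.mul_one, zero_add, add_zero]

theorem toBlocks₁₁_one [DecidableEq l] [DecidableEq m] [Zero R] [One R] :
    (1 : Matrix (l ⊕ m) (l ⊕ m) R).toBlocks₁₁ = 1 := by
  rw [← fromBlocks_one, toBlocks_fromBlocks₁₁]

end Matrix

theorem stmt_9_general {F : Type*} [Field F] {α β : Type*} [Fintype α] [Fintype β]
    [DecidableEq α] [DecidableEq β]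
    (S T : Matrix (α ⊕ β) (α ⊕ β) F)
    (hST : S * T = 1)
    (hB : ∀ M : Matrix (α ⊕ β) (α ⊕ β) F,
      (M.toBlocks₁₁ = 0 ∧ M.toBlocks₁₂ = 0 ∧ M.toBlocks₂₁ = 0) →
      ((S * M * T).toBlocks₁₁ = 0 ∧ (S * M * T).toBlocks₁₂ = 0 ∧
        (S * M * T).toBlocks₂₁ = 0)) :
    S.toBlocks₁₁ * T.toBlocks₁₁ = 1 ∧ T.toBlocks₁₁ * S.toBlocks₁₁ = 1 := by
  have hcross : S.toBlocks₁₂ * T.toBlocks₂₁ = 0 := by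
    rw [← toBlocks₁₁_mul_fromBlocks_zero_one_mul]
    exact (hB (fromBlocks 0 0 0 1) ⟨rfl, rfl, rfl⟩).1
  have hS₁₁T₁₁ : S.toBlocks₁₁ * T.toBlocks₁₁ = 1 := by
    rw [← add_zero (S.toBlocks₁₁ * T.toBlocks₁₁), ← hcross, ← toBlocks₁₁_mul, hST,
      toBlocks₁₁_one]
  exact ⟨hS₁₁T₁₁, mul_eq_one_comm.mp hS₁₁T₁₁⟩

theorem stmt_9 {F : Type*} [Field F] {α β : Type*} [Fintype α] [Fintype β]
    [DecidableEq α] [DecidableEq β]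
    (S T : Matrix (α ⊕ β) (α ⊕ β) F)
    (hST : S * T = 1) (hTS : T * S = 1)
    (hA : ∀ M : Matrix (α ⊕ β) (α ⊕ β) F,
      (M.toBlocks₁₂ = 0 ∧ M.toBlocks₂₁ = 0 ∧ M.toBlocks₂₂ = 0) →
      ((S * M * T).toBlocks₁₂ = 0 ∧ (S * M * T).toBlocks₂₁ = 0 ∧
        (S * M * T).toBlocks₂₂ = 0))
    (hB : ∀ M : Matrix (α ⊕ β) (α ⊕ β) F,
      (M.toBlocks₁₁ = 0 ∧ M.toBlocks₁₂ = 0 ∧ M.toBlocks₂₁ = 0) →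
      ((S * M * T).toBlocks₁₁ = 0 ∧ (S * M * T).toBlocks₁₂ = 0 ∧
        (S * M * T).toBlocks₂₁ = 0)) :
    S.toBlocks₁₁ * T.toBlocks₁₁ = 1 ∧ T.toBlocks₁₁ * S.toBlocks₁₁ = 1 :=
  stmt_9_general S T hST hB
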